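/- With N odd, C ⊂ E(k) cyclic of order N, s_O normalized with divisor N·O − C, and s_P := τ_{−P}^* s_O for P ∈ C, the product ∏_{P∈C} s_P is a constant function equal to a root of unity. -/

import Mathlib

/-- An abstract model of the group of points and the function field of an elliptic curve `E`
over `k`, together with divisors, pullbacks along translations and inversion, and the
pushforward (norm) maps `[n]_*` along the multiplication-by-`n` isogenies. -/
structure CurveFn (k : Type) [Field k] where
  /-- the group of points `E(k)` (all points are closed since `k` is algebraically closed) -/
  Pt : Type
  [grp : AddCommGroup Pt]
  /-- the function field `k(E)` -/
  F : Type
  [fld : Field F]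
  [alg : Algebra k F]
  /-- the divisor of a nonzero rational function -/
  div : Fˣ → (Pt →₀ ℤ)
  div_mul : ∀ f g : Fˣ, div (f * g) = div f + div g
  div_degree : ∀ f : Fˣ, (div f).sum (fun _ n => n) = 0
  /-- the inclusion of the constants `k^× ⊆ k(E)^×` -/
  constU : kˣ →* Fˣ
  constU_spec : ∀ a : kˣ, ((constU a : Fˣ) : F) = algebraMap k F (a : k)
  div_constU : ∀ a : kˣ, div (constU a) = 0
  eq_constU_of_div_eq_zero : ∀ f : Fˣ, div f = 0 → ∃ a : kˣ, f = constU a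
  /-- pullback `τ_P^*` along translation by a point `P` -/
  tau : Pt → (F ≃+* F)
  tau_algebraMap : ∀ (P : Pt) (a : k), tau P (algebraMap k F a) = algebraMap k F a
  tau_zero : tau 0 = RingEquiv.refl F
  tau_add : ∀ P Q : Pt, tau (P + Q) = (tau Q).trans (tau P)
  div_tau : ∀ (P : Pt) (f : Fˣ),
    div (Units.map (tau P).toRingHom.toMonoidHom f) = (div f).mapDomain (fun x => x - P)
  /-- the pushforward (norm) `[n]_*` along multiplication by `n` -/
  pushNorm : ℕ → (Fˣ →* Fˣ)
  div_pushNorm : ∀ (n : ℕ) (f : Fˣ),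
    div (pushNorm n f) = (div f).mapDomain (fun P => (n : ℤ) • P)
  pushNorm_constU : ∀ (n : ℕ) (a : kˣ), pushNorm n (constU a) = constU (a ^ (n ^ 2))
  pushNorm_mul_eq : ∀ m n : ℕ, pushNorm (m * n) = (pushNorm m).comp (pushNorm n)
  pushNorm_tau : ∀ (n : ℕ) (P : Pt) (f : Fˣ),
    pushNorm n (Units.map (tau P).toRingHom.toMonoidHom f)
      = Units.map (tau (n • P)).toRingHom.toMonoidHom (pushNorm n f)
  /-- pullback `[-1]^*` along the inversion map of `E` -/
  negPull : F ≃+* F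
  negPull_algebraMap : ∀ a : k, negPull (algebraMap k F a) = algebraMap k F a
  negPull_negPull : ∀ x : F, negPull (negPull x) = x
  div_negPull : ∀ f : Fˣ,
    div (Units.map negPull.toRingHom.toMonoidHom f) = (div f).mapDomain (fun x => -x)
  negPull_tau : ∀ (P : Pt) (x : F), negPull (tau (-P) x) = tau P (negPull x)

attribute [instance] CurveFn.grp CurveFn.fld CurveFn.alg

variable {k : Type} [Field k]

/-- pullback along translation, on units -/
def CurveFn.tauU (X : CurveFn k) (P : X.Pt) : X.Fˣ →* X.Fˣ :=
  Units.map (X.tau P).toRingHom.toMonoidHom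

/-- pullback along inversion, on units -/
def CurveFn.negPullU (X : CurveFn k) : X.Fˣ →* X.Fˣ :=
  Units.map X.negPull.toRingHom.toMonoidHom

/-- `a` is a root of unity. -/
def IsRootOfUnity {M : Type*} [Monoid M] (a : M) : Prop := ∃ n : ℕ, 0 < n ∧ a ^ n = 1

/-- `f ∈ k(E)^×` is *normalized* if `[n]_* f` is a constant root of unity for some `n ≥ 1`. -/
def CurveFn.Normalized (X : CurveFn k) (f : X.Fˣ) : Prop :=
  ∃ n : ℕ, 0 < n ∧ ∃ u : kˣ, IsRootOfUnity u ∧ X.pushNorm n f = X.constU u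

/-!
Each translate `s_P` has divisor `N·P − C`, and summing over `P ∈ C` the `N·P` terms give `N·C`
while the translates of `C` give `N` copies of `C`; so `∏ s_P` has divisor zero and is a
constant `a`. Normalized functions are closed under translation and products, so `[n]_*` of
the constant `a`, which is `a ^ n²`, is a root of unity, hence so is `a`.
-/

theorem IsRootOfUnity.mul {M : Type*} [CommMonoid M] {a b : M}
    (ha : IsRootOfUnity a) (hb : IsRootOfUnity b) : IsRootOfUnity (a * b) := by
  obtain ⟨p, hp, hap⟩ := ha
  obtain ⟨q, hq, hbq⟩ := hb
  refine ⟨p * q, Nat.mul_pos hp hq, ?_⟩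
  rw [mul_pow, pow_mul, hap, one_pow, one_mul, mul_comm, pow_mul, hbq, one_pow]

theorem IsRootOfUnity.pow {M : Type*} [Monoid M] {a : M} (ha : IsRootOfUnity a) (n : ℕ) :
    IsRootOfUnity (a ^ n) := by
  obtain ⟨m, hm, ham⟩ := ha
  exact ⟨m, hm, by rw [pow_right_comm, ham, one_pow]⟩

theorem IsRootOfUnity.of_pow {M : Type*} [Monoid M] {a : M} {n : ℕ} (hn : 0 < n)
    (h : IsRootOfUnity (a ^ n)) : IsRootOfUnity a := by
  obtain ⟨m, hm, ham⟩ := h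
  exact ⟨n * m, Nat.mul_pos hn hm, by rw [pow_mul, ham]⟩

namespace CurveFn

variable (X : CurveFn k)

noncomputable def divHom : X.Fˣ →* Multiplicative (X.Pt →₀ ℤ) :=
  MonoidHom.mk' (fun f => Multiplicative.ofAdd (X.div f)) X.div_mul

theorem div_prod {ι : Type*} (s : Finset ι) (f : ι → X.Fˣ) :
    X.div (∏ i ∈ s, f i) = ∑ i ∈ s, X.div (f i) :=
  toAdd_prod s (fun i => X.divHom (f i)) ▸ congrArg Multiplicative.toAdd (map_prod X.divHom f s)

theorem div_tauU (P : X.Pt) (f : X.Fˣ) :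
    X.div (X.tauU P f) = (X.div f).mapDomain (fun x => x - P) :=
  X.div_tau P f

theorem constU_injective : Function.Injective X.constU := by
  intro a b hab
  have hcoe := congrArg (fun f : X.Fˣ => (f : X.F)) hab
  simp only [X.constU_spec] at hcoe
  exact Units.ext ((algebraMap k X.F).injective hcoe)

theorem tauU_constU (P : X.Pt) (a : kˣ) : X.tauU P (X.constU a) = X.constU a :=
  Units.ext <| by
    change X.tau P ((X.constU a : X.Fˣ) : X.F) = _
    rw [X.constU_spec, X.tau_algebraMap]

theorem pushNorm_tauU (n : ℕ) (P : X.Pt) (f : X.Fˣ) :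
    X.pushNorm n (X.tauU P f) = X.tauU (n • P) (X.pushNorm n f) :=
  X.pushNorm_tau n P f

variable {X}

theorem Normalized.one : X.Normalized 1 :=
  ⟨1, one_pos, 1, ⟨1, one_pos, one_pow 1⟩, by rw [map_one, map_one]⟩

theorem Normalized.tauU {f : X.Fˣ} (hf : X.Normalized f) (P : X.Pt) :
    X.Normalized (X.tauU P f) := by
  obtain ⟨n, hn, u, hu, hfu⟩ := hf
  exact ⟨n, hn, u, hu, by rw [X.pushNorm_tauU, hfu, X.tauU_constU]⟩

theorem Normalized.mul {f g : X.Fˣ} (hf : X.Normalized f) (hg : X.Normalized g) :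
    X.Normalized (f * g) := by
  obtain ⟨m, hm, u, hu, hfu⟩ := hf
  obtain ⟨n, hn, v, hv, hgv⟩ := hg
  have hf' : X.pushNorm (n * m) f = X.constU (u ^ n ^ 2) := by
    rw [X.pushNorm_mul_eq, MonoidHom.comp_apply, hfu, X.pushNorm_constU]
  have hg' : X.pushNorm (n * m) g = X.constU (v ^ m ^ 2) := by
    rw [mul_comm, X.pushNorm_mul_eq, MonoidHom.comp_apply, hgv, X.pushNorm_constU]
  exact ⟨n * m, Nat.mul_pos hn hm, u ^ n ^ 2 * v ^ m ^ 2, (hu.pow _).mul (hv.pow _), by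
    rw [map_mul, hf', hg', map_mul]⟩

theorem Normalized.prod {ι : Type*} {s : Finset ι} {f : ι → X.Fˣ}
    (hf : ∀ i ∈ s, X.Normalized (f i)) : X.Normalized (∏ i ∈ s, f i) :=
  Finset.prod_induction f X.Normalized (fun _ _ => Normalized.mul) Normalized.one hf

theorem Normalized.isRootOfUnity_of_eq_constU {f : X.Fˣ} {a : kˣ} (hf : X.Normalized f)
    (hfa : f = X.constU a) : IsRootOfUnity a := by
  obtain ⟨n, hn, u, hu, hfu⟩ := hf
  rw [hfa, X.pushNorm_constU] at hfu
  exact (X.constU_injective hfu ▸ hu).of_pow (pow_pos hn 2)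

variable (X)

theorem div_prod_tauU_neg_eq_zero {G : Type*} [AddCommGroup G] [Fintype G] (ι : G →+ X.Pt)
    {f : X.Fˣ} (hf : X.div f =
      Finsupp.single 0 (Fintype.card G : ℤ) - ∑ g : G, Finsupp.single (ι g) (1 : ℤ)) :
    X.div (∏ g : G, X.tauU (-ι g) f) = 0 := by
  classical
  set C : X.Pt →₀ ℤ := ∑ h : G, Finsupp.single (ι h) 1
  have htranslate (g : G) :
      X.div (X.tauU (-ι g) f) = Fintype.card G • Finsupp.single (ι g) 1 - C := by
    have hC : ∑ h : G, Finsupp.single (ι h + ι g) (1 : ℤ) = C :=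
      Fintype.sum_equiv (Equiv.addRight g) _ _ (fun h => by simp)
    rw [X.div_tauU, hf, Finsupp.mapDomain_sub, Finsupp.mapDomain_finsetSum, ← hC]
    simp [Finsupp.mapDomain_single, Finsupp.smul_single]
  rw [X.div_prod, Finset.sum_congr rfl (fun g _ => htranslate g), Finset.sum_sub_distrib,
    ← Finset.smul_sum, Finset.sum_const, Finset.card_univ, sub_self]

end CurveFn

theorem product_of_sP_is_root_of_unity_general
    (k : Type) [Field k] (X : CurveFn k)
    (N : ℕ) [NeZero N]
    (ι : ZMod N →+ X.Pt)
    (s : X.Fˣ) (hs : X.Normalized s)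
    (hdiv : X.div s =
      Finsupp.single (0 : X.Pt) (N : ℤ) - ∑ j : ZMod N, Finsupp.single (ι j) (1 : ℤ)) :
    ∃ u : kˣ, IsRootOfUnity u ∧
      (∏ j : ZMod N, X.tau (-(ι j)) ((s : X.Fˣ) : X.F)) = algebraMap k X.F (u : k) := by
  obtain ⟨a, ha⟩ := X.eq_constU_of_div_eq_zero _
    (X.div_prod_tauU_neg_eq_zero ι (by rwa [ZMod.card]))
  have hprod : X.Normalized (∏ j : ZMod N, X.tauU (-ι j) s) :=
    CurveFn.Normalized.prod fun j _ => hs.tauU (-ι j)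
  refine ⟨a, hprod.isRootOfUnity_of_eq_constU ha, ?_⟩
  rw [← X.constU_spec, ← ha, Units.coe_prod]
  rfl

/-- With `N` odd, `C ⊂ E(k)` cyclic of order `N`, `s_O` normalized with divisor
`N·O − C`, and `s_P := τ_{−P}^* s_O` for `P ∈ C`, the product `∏_{P∈C} s_P` is a constant
function equal to a root of unity. -/
theorem product_of_sP_is_root_of_unity
    (k : Type) [Field k] [IsAlgClosed k] (X : CurveFn k)
    (N : ℕ) [NeZero N] (hodd : Odd N) (hchar : (N : k) ≠ 0)
    (ι : ZMod N →+ X.Pt) (hι : Function.Injective ι)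
    (s : X.Fˣ) (hs : X.Normalized s)
    (hdiv : X.div s =
      Finsupp.single (0 : X.Pt) (N : ℤ) - ∑ j : ZMod N, Finsupp.single (ι j) (1 : ℤ)) :
    ∃ u : kˣ, IsRootOfUnity u ∧
      (∏ j : ZMod N, X.tau (-(ι j)) ((s : X.Fˣ) : X.F)) = algebraMap k X.F (u : k) :=
  product_of_sP_is_root_of_unity_general k X N ι s hs hdiv
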